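/- Let F be a finite field with |F| = q ≥ 2 and let p ∈ [0,1] be a real number. With channel failure probability p, the average failure probability over the two sinks of the butterfly network equals the common value of the two sink failure probabilities: P̃_av = (P̃_e(t1) + P̃_e(t2))/2 = 1 − (q+1)(q-1)^6(1−p)^6/q^7, where P̃_e(t_i) is the probability, over independent uniform local encoding coefficients and independent channel successes each of probability 1−p, that the erased decoding matrix at sink t_i is not invertible. -/

import Mathlib

/- Active global encoding kernels of the butterfly network with channel erasures:
`fᵢt` is the usual linear-combination value when the Boolean `eᵢ` (channel `eᵢ`
successful) is true, and the zero vector otherwise. The source kernel is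
`K_s = [[a,c],[b,d]]`, i.e. `f1 = (a,b)ᵀ`, `f2 = (c,d)ᵀ`. -/

def f1t {F : Type*} [Field F] (a b : F) (e1 : Bool) : Fin 2 → F :=
  if e1 then ![a, b] else 0

def f2t {F : Type*} [Field F] (c d : F) (e2 : Bool) : Fin 2 → F :=
  if e2 then ![c, d] else 0

def f3t {F : Type*} [Field F] (a b k13 : F) (e1 e3 : Bool) : Fin 2 → F :=
  if e3 then k13 • f1t a b e1 else 0

def f4t {F : Type*} [Field F] (a b k14 : F) (e1 e4 : Bool) : Fin 2 → F :=
  if e4 then k14 • f1t a b e1 else 0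

def f5t {F : Type*} [Field F] (c d k25 : F) (e2 e5 : Bool) : Fin 2 → F :=
  if e5 then k25 • f2t c d e2 else 0

def f6t {F : Type*} [Field F] (c d k26 : F) (e2 e6 : Bool) : Fin 2 → F :=
  if e6 then k26 • f2t c d e2 else 0

def f7t {F : Type*} [Field F] (a b c d k14 k47 k25 k57 : F) (e1 e2 e4 e5 e7 : Bool) :
    Fin 2 → F :=
  if e7 then k47 • f4t a b k14 e1 e4 + k57 • f5t c d k25 e2 e5 else 0

def f8t {F : Type*} [Field F] (a b c d k14 k47 k78 k25 k57 : F) (e1 e2 e4 e5 e7 e8 : Bool) :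
    Fin 2 → F :=
  if e8 then k78 • f7t a b c d k14 k47 k25 k57 e1 e2 e4 e5 e7 else 0

def f9t {F : Type*} [Field F] (a b c d k14 k47 k79 k25 k57 : F) (e1 e2 e4 e5 e7 e9 : Bool) :
    Fin 2 → F :=
  if e9 then k79 • f7t a b c d k14 k47 k25 k57 e1 e2 e4 e5 e7 else 0

/- The erased decoding matrix at sink `t₁`: columns `f̃3` and `f̃8`. -/
def Ft1t {F : Type*} [Field F] (a b c d k13 k14 k47 k78 k25 k57 : F)
    (e1 e2 e3 e4 e5 e7 e8 : Bool) : Matrix (Fin 2) (Fin 2) F :=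
  !![f3t a b k13 e1 e3 0, f8t a b c d k14 k47 k78 k25 k57 e1 e2 e4 e5 e7 e8 0;
     f3t a b k13 e1 e3 1, f8t a b c d k14 k47 k78 k25 k57 e1 e2 e4 e5 e7 e8 1]

/- The erased decoding matrix at sink `t₂`: columns `f̃6` and `f̃9`. -/
def Ft2t {F : Type*} [Field F] (a b c d k14 k47 k79 k25 k57 k26 : F)
    (e1 e2 e4 e5 e6 e7 e9 : Bool) : Matrix (Fin 2) (Fin 2) F :=
  !![f6t c d k26 e2 e6 0, f9t a b c d k14 k47 k79 k25 k57 e1 e2 e4 e5 e7 e9 0;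
     f6t c d k26 e2 e6 1, f9t a b c d k14 k47 k79 k25 k57 e1 e2 e4 e5 e7 e9 1]

/- The failure probability of sink `t₁` with channel failure probability `p`: the
probability, over independent uniform local encoding coefficients
`(a,b,c,d,k13,k14,k25,k26,k47,k57,k78,k79) ∈ F^12` (encoded as `v 0, …, v 11`) and
independent channel successes `ε1, …, ε9` (encoded as `e 0, …, e 8`), each success
having probability `1 - p`, that the erased decoding matrix `F̃_{t1} = (f̃3 f̃8)` is
not invertible. -/
open Classical in
noncomputable def PeT1 (F : Type*) [Field F] [Fintype F] (p : ℝ) : ℝ :=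
  ∑ v : Fin 12 → F, ∑ e : Fin 9 → Bool,
    if ¬ IsUnit (Ft1t (v 0) (v 1) (v 2) (v 3) (v 4) (v 5) (v 8) (v 10) (v 6) (v 9)
        (e 0) (e 1) (e 2) (e 3) (e 4) (e 6) (e 7)) then
      (1 / (Fintype.card F : ℝ) ^ 12) * ∏ i : Fin 9, (if e i then 1 - p else p)
    else 0

/- The failure probability of sink `t₂` with channel failure probability `p`:
the probability that the erased decoding matrix `F̃_{t2} = (f̃6 f̃9)` is not
invertible. -/
open Classical in
noncomputable def PeT2 (F : Type*) [Field F] [Fintype F] (p : ℝ) : ℝ :=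
  ∑ v : Fin 12 → F, ∑ e : Fin 9 → Bool,
    if ¬ IsUnit (Ft2t (v 0) (v 1) (v 2) (v 3) (v 5) (v 8) (v 11) (v 6) (v 9) (v 7)
        (e 0) (e 1) (e 3) (e 4) (e 5) (e 6) (e 8)) then
      (1 / (Fintype.card F : ℝ) ^ 12) * ∏ i : Fin 9, (if e i then 1 - p else p)
    else 0

/-! At sink `t₁` the decoding matrix has determinant `k₁₃ k₂₅ k₅₇ k₇₈ (ad - bc)` when the six
channels `e₁, e₂, e₃, e₅, e₇, e₈` on its two paths all succeed, and `0` otherwise (symmetrically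
at `t₂`). So the sink decodes exactly when a coefficient event (invertible source kernel and four
nonzero local coefficients) and an independent channel event both happen. Counting `GL₂(F)` the
first has probability `(q² - 1)(q² - q)(q - 1)⁴ q⁴ / q¹² = (q + 1)(q - 1)⁶ / q⁷`, and the second
has probability `(1 - p)⁶`. -/

open Finset

section Bernoulli

variable {ι : Type*} [Fintype ι] [DecidableEq ι]

lemma sum_prod_bernoulli (p : ℝ) :
    ∑ e : ι → Bool, ∏ i, (if e i then 1 - p else p) = 1 := by
  rw [← Fintype.prod_sum (fun _ (b : Bool) => if b then 1 - p else p)]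
  simp

lemma sum_ite_forall_mem_prod_bernoulli (S : Finset ι) (p : ℝ) :
    ∑ e : ι → Bool, (if ∀ i ∈ S, e i = true then ∏ i, (if e i then 1 - p else p) else 0) =
      (1 - p) ^ #S := by
  have hprod : ∀ e : ι → Bool,
      (if ∀ i ∈ S, e i = true then ∏ i, (if e i then 1 - p else p) else 0) =
        ∏ i, (if e i then 1 - p else if i ∈ S then 0 else p) := by
    intro e
    split_ifs with h
    · refine prod_congr rfl fun i _ => ?_
      cases hi : e i
      · have hiS : i ∉ S := fun hiS => by simp [h i hiS] at hi
        simp [hiS]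
      · rfl
    · obtain ⟨i, hiS, hi⟩ := not_forall₂.mp h
      exact (prod_eq_zero (mem_univ i) (by simp [hi, hiS])).symm
  have hsum : ∀ i, ∑ b : Bool, (if b then 1 - p else if i ∈ S then 0 else p) =
      if i ∈ S then 1 - p else 1 := by
    intro i
    split_ifs <;> simp [*]
  rw [Fintype.sum_congr _ _ hprod,
    ← Fintype.prod_sum (fun i (b : Bool) => if b then 1 - p else if i ∈ S then 0 else p)]
  simp only [hsum, Fintype.prod_ite_mem, prod_const]

end Bernoulli

lemma sum_sum_ite_not_and {α β : Type*} [Fintype α] [Fintype β] (P : α → Prop) (Q : β → Prop)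
    [DecidablePred P] [DecidablePred Q] (c : ℝ) (w : β → ℝ) :
    ∑ a, ∑ b, (if ¬(P a ∧ Q b) then c * w b else 0) =
      c * (Fintype.card α * ∑ b, w b - #{a | P a} * ∑ b, if Q b then w b else 0) := by
  have h : ∀ a b, (if ¬(P a ∧ Q b) then c * w b else 0) =
      c * w b - (if P a then 1 else 0) * (c * if Q b then w b else 0) := by
    intro a b
    by_cases ha : P a <;> by_cases hb : Q b <;> simp [ha, hb]
  simp only [h, sum_sub_distrib, ← mul_sum, ← sum_mul, sum_const, card_univ, sum_boole,
    nsmul_eq_mul]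
  ring

lemma sum_ite_not_mul_prod_bernoulli {α ι : Type*} [Fintype α] [Nonempty α] [Fintype ι]
    [DecidableEq ι] (Good : α → Prop) [DecidablePred Good] (S : Finset ι)
    (Succ : α → (ι → Bool) → Prop) [∀ a e, Decidable (Succ a e)]
    (hSucc : ∀ a e, Succ a e ↔ Good a ∧ ∀ i ∈ S, e i = true) (p : ℝ) :
    ∑ a, ∑ e : ι → Bool, (if ¬ Succ a e then
        1 / (Fintype.card α : ℝ) * ∏ i, (if e i then 1 - p else p) else 0) =
      1 - #{a | Good a} / (Fintype.card α : ℝ) * (1 - p) ^ #S := by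
  simp only [hSucc]
  rw [sum_sum_ite_not_and, sum_prod_bernoulli, sum_ite_forall_mem_prod_bernoulli]
  field_simp

lemma det_Ft1t {F : Type*} [Field F] (a b c d k13 k14 k47 k78 k25 k57 : F)
    (e1 e2 e3 e4 e5 e7 e8 : Bool) :
    (Ft1t a b c d k13 k14 k47 k78 k25 k57 e1 e2 e3 e4 e5 e7 e8).det =
      if e1 ∧ e2 ∧ e3 ∧ e5 ∧ e7 ∧ e8 then k13 * k25 * k57 * k78 * (a * d - b * c) else 0 := by
  cases e1 <;> cases e2 <;> cases e3 <;> cases e4 <;> cases e5 <;> cases e7 <;> cases e8 <;>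
    simp [Ft1t, f3t, f8t, f7t, f4t, f5t, f1t, f2t, Matrix.det_fin_two_of] <;> ring

lemma det_Ft2t {F : Type*} [Field F] (a b c d k14 k47 k79 k25 k57 k26 : F)
    (e1 e2 e4 e5 e6 e7 e9 : Bool) :
    (Ft2t a b c d k14 k47 k79 k25 k57 k26 e1 e2 e4 e5 e6 e7 e9).det =
      if e1 ∧ e2 ∧ e4 ∧ e6 ∧ e7 ∧ e9 then k26 * k14 * k47 * k79 * (b * c - a * d) else 0 := by
  cases e1 <;> cases e2 <;> cases e4 <;> cases e5 <;> cases e6 <;> cases e7 <;> cases e9 <;>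
    simp [Ft2t, f6t, f9t, f7t, f4t, f5t, f1t, f2t, Matrix.det_fin_two_of] <;> ring

-- `v (Fin.natAdd 4 i)` is the `i`-th of `k13, k14, k25, k26, k47, k57, k78, k79`, and `e j` is
-- channel `e(j+1)`.
lemma isUnit_Ft1t_iff {F : Type*} [Field F] (v : Fin 12 → F) (e : Fin 9 → Bool) :
    IsUnit (Ft1t (v 0) (v 1) (v 2) (v 3) (v 4) (v 5) (v 8) (v 10) (v 6) (v 9)
        (e 0) (e 1) (e 2) (e 3) (e 4) (e 6) (e 7)) ↔
      (v 0 * v 3 - v 1 * v 2 ≠ 0 ∧ ∀ i ∈ ({0, 2, 5, 6} : Finset (Fin 8)), v (Fin.natAdd 4 i) ≠ 0) ∧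
        ∀ i ∈ ({0, 1, 2, 4, 6, 7} : Finset (Fin 9)), e i = true := by
  rw [Matrix.isUnit_iff_isUnit_det, det_Ft1t, isUnit_iff_ne_zero]
  split_ifs with h
  · simp [h]
    tauto
  · simp only [ne_eq, not_true, false_iff, not_and]
    intro _
    simpa [and_assoc] using h

lemma isUnit_Ft2t_iff {F : Type*} [Field F] (v : Fin 12 → F) (e : Fin 9 → Bool) :
    IsUnit (Ft2t (v 0) (v 1) (v 2) (v 3) (v 5) (v 8) (v 11) (v 6) (v 9) (v 7)
        (e 0) (e 1) (e 3) (e 4) (e 5) (e 6) (e 8)) ↔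
      (v 0 * v 3 - v 1 * v 2 ≠ 0 ∧ ∀ i ∈ ({1, 3, 4, 7} : Finset (Fin 8)), v (Fin.natAdd 4 i) ≠ 0) ∧
        ∀ i ∈ ({0, 1, 3, 5, 6, 8} : Finset (Fin 9)), e i = true := by
  rw [Matrix.isUnit_iff_isUnit_det, det_Ft2t, isUnit_iff_ne_zero]
  split_ifs with h
  · simp [h, sub_ne_zero, eq_comm (a := v 1 * v 2)]
    tauto
  · simp only [ne_eq, not_true, false_iff, not_and]
    intro _
    simpa [and_assoc] using h

section FiniteField

variable {F : Type*} [Field F] [Fintype F]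

local notation "q" => Fintype.card F

lemma card_filter_det_ne_zero [DecidableEq F] :
    #{M : Matrix (Fin 2) (Fin 2) F | M.det ≠ 0} = (q ^ 2 - 1) * (q ^ 2 - q) := by
  have e : {M : Matrix (Fin 2) (Fin 2) F // M.det ≠ 0} ≃ GL (Fin 2) F :=
    (Equiv.subtypeEquivRight fun M => by
      rw [← isUnit_iff_ne_zero, ← Matrix.isUnit_iff_isUnit_det]; rfl).trans
    Submonoid.unitsTypeEquivIsUnitSubmonoid.toEquiv.symm
  rw [← Fintype.card_subtype, ← Nat.card_eq_fintype_card, Nat.card_congr e,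
    Matrix.card_GL_field, Fin.prod_univ_two]
  simp

lemma card_filter_forall_mem_ne_zero [DecidableEq F] {ι : Type*} [Fintype ι] [DecidableEq ι]
    (T : Finset ι) :
    #{w : ι → F | ∀ i ∈ T, w i ≠ 0} = (q - 1) ^ #T * q ^ #Tᶜ := by
  have h : ({w : ι → F | ∀ i ∈ T, w i ≠ 0} : Finset (ι → F)) =
      Fintype.piFinset fun i => if i ∈ T then {0}ᶜ else univ := by
    ext w
    simp only [mem_filter, mem_univ, true_and, Fintype.mem_piFinset]
    refine forall_congr' fun i => ?_
    split_ifs <;> simp [*]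
  rw [h, Fintype.card_piFinset]
  simp only [apply_ite card, card_univ, prod_ite, prod_const]
  rw [filter_univ_mem, filter_not, filter_univ_mem, ← compl_eq_univ_sdiff,
    card_compl ({0} : Finset F), card_singleton]

lemma card_filter_coeffs [DecidableEq F] (T : Finset (Fin 8)) :
    #{v : Fin 12 → F | v 0 * v 3 - v 1 * v 2 ≠ 0 ∧ ∀ i ∈ T, v (Fin.natAdd 4 i) ≠ 0} =
      (q ^ 2 - 1) * (q ^ 2 - q) * ((q - 1) ^ #T * q ^ #Tᶜ) := by
  let e : Matrix (Fin 2) (Fin 2) F × (Fin 8 → F) ≃ (Fin 12 → F) :=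
    ((piFinTwoEquiv fun _ => Fin 2 → F).trans (Fin.appendEquiv 2 2)).prodCongr (Equiv.refl _)
      |>.trans (Fin.appendEquiv 4 8)
  have he : ∀ x : Matrix (Fin 2) (Fin 2) F × (Fin 8 → F),
      (x.1.det ≠ 0 ∧ ∀ i ∈ T, x.2 i ≠ 0) ↔
        (e x 0 * e x 3 - e x 1 * e x 2 ≠ 0 ∧ ∀ i ∈ T, e x (Fin.natAdd 4 i) ≠ 0) := by
    rintro ⟨M, w⟩
    have hw : ∀ i, e (M, w) (Fin.natAdd 4 i) = w i := Fin.append_right _ _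
    rw [Matrix.det_fin_two]
    simp only [hw]
    exact Iff.rfl
  rw [← card_filter_det_ne_zero, ← card_filter_forall_mem_ne_zero, ← Fintype.card_subtype,
    ← Fintype.card_subtype, ← Fintype.card_subtype, ← Fintype.card_prod,
    ← Fintype.card_congr (e.subtypeEquiv he)]
  exact Fintype.card_congr (@Equiv.subtypeProdEquivProd _ _
    (fun M : Matrix (Fin 2) (Fin 2) F => M.det ≠ 0) (fun w : Fin 8 → F => ∀ i ∈ T, w i ≠ 0))

lemma card_filter_coeffs_div_card [DecidableEq F] (T : Finset (Fin 8)) (hT : #T = 4) :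
    (#{v : Fin 12 → F | v 0 * v 3 - v 1 * v 2 ≠ 0 ∧ ∀ i ∈ T, v (Fin.natAdd 4 i) ≠ 0} : ℝ) /
        Fintype.card (Fin 12 → F) =
      ((q : ℝ) + 1) * ((q : ℝ) - 1) ^ 6 / (q : ℝ) ^ 7 := by
  have hq : 1 ≤ q := Fintype.card_pos
  have hq2 : q ≤ q ^ 2 := Nat.le_self_pow two_ne_zero _
  rw [card_filter_coeffs, card_compl, hT, Fintype.card_fun, Fintype.card_fin, Fintype.card_fin]
  push_cast [Nat.cast_sub hq, Nat.cast_sub hq2, Nat.cast_sub (Nat.one_le_pow _ _ hq)]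
  field_simp
  ring

lemma PeT1_eq (p : ℝ) :
    PeT1 F p = 1 - ((q : ℝ) + 1) * ((q : ℝ) - 1) ^ 6 * (1 - p) ^ 6 / (q : ℝ) ^ 7 := by
  classical
  have hcard : (q : ℝ) ^ 12 = Fintype.card (Fin 12 → F) := by simp
  rw [PeT1, hcard, sum_ite_not_mul_prod_bernoulli _ _ _ isUnit_Ft1t_iff,
    card_filter_coeffs_div_card _ rfl, show #({0, 1, 2, 4, 6, 7} : Finset (Fin 9)) = 6 from rfl]
  ring

lemma PeT2_eq (p : ℝ) :
    PeT2 F p = 1 - ((q : ℝ) + 1) * ((q : ℝ) - 1) ^ 6 * (1 - p) ^ 6 / (q : ℝ) ^ 7 := by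
  classical
  have hcard : (q : ℝ) ^ 12 = Fintype.card (Fin 12 → F) := by simp
  rw [PeT2, hcard, sum_ite_not_mul_prod_bernoulli _ _ _ isUnit_Ft2t_iff,
    card_filter_coeffs_div_card _ rfl, show #({0, 1, 3, 5, 6, 8} : Finset (Fin 9)) = 6 from rfl]
  ring

end FiniteField

theorem butterfly_erased_average_failure_probability_general
    (F : Type*) [Field F] [Fintype F] (q : ℕ) (hq : Fintype.card F = q)
    (p : ℝ) :
    PeT1 F p = PeT2 F p ∧
    (PeT1 F p + PeT2 F p) / 2 =
      1 - ((q : ℝ) + 1) * ((q : ℝ) - 1) ^ 6 * (1 - p) ^ 6 / (q : ℝ) ^ 7 ∧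
    PeT1 F p = 1 - ((q : ℝ) + 1) * ((q : ℝ) - 1) ^ 6 * (1 - p) ^ 6 / (q : ℝ) ^ 7 := by
  subst hq
  refine ⟨(PeT1_eq p).trans (PeT2_eq p).symm, ?_, PeT1_eq p⟩
  rw [PeT1_eq, PeT2_eq]
  ring

theorem butterfly_erased_average_failure_probability
    (F : Type*) [Field F] [Fintype F] (q : ℕ) (hq : Fintype.card F = q) (hq2 : 2 ≤ q)
    (p : ℝ) (hp : p ∈ Set.Icc (0 : ℝ) 1) :
    PeT1 F p = PeT2 F p ∧
    (PeT1 F p + PeT2 F p) / 2 =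
      1 - ((q : ℝ) + 1) * ((q : ℝ) - 1) ^ 6 * (1 - p) ^ 6 / (q : ℝ) ^ 7 ∧
    PeT1 F p = 1 - ((q : ℝ) + 1) * ((q : ℝ) - 1) ^ 6 * (1 - p) ^ 6 / (q : ℝ) ^ 7 :=
  butterfly_erased_average_failure_probability_general F q hq p
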